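/- Sandwich property of conditional inverses: let F : M → M be local, increasing, and respect a.e. equality, let G_l, G_r be a conditional left-inverse and a conditional right-inverse of F, and let G be any conditional inverse of F. Then for every s ∈ M: G_l(s) ≤ G(s) ≤ G_r(s) a.e.; moreover the left-continuous version of G agrees a.e. with G_l(s) and the right-continuous version of G agrees a.e. with G_r(s), for every s ∈ M. -/

import Mathlib

open MeasureTheory

variable {Ω : Type*} [MeasurableSpace Ω]

/-- `M`: the measurable functions `Ω → [-∞, ∞]`. -/
def MSp (Ω : Type*) [MeasurableSpace Ω] : Type _ := {f : Ω → EReal // Measurable f}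

/-- The constant function `+∞` as an element of `M`. -/
noncomputable def MSp.mtop (Ω : Type*) [MeasurableSpace Ω] : MSp Ω := ⟨fun _ => ⊤, measurable_const⟩

/-- The constant function `-∞` as an element of `M`. -/
noncomputable def MSp.mbot (Ω : Type*) [MeasurableSpace Ω] : MSp Ω := ⟨fun _ => ⊥, measurable_const⟩

open Classical in
/-- The pointwise piecewise combination `1_A f + 1_{Aᶜ} g`. -/
noncomputable def pcf (A : Set Ω) (f g : Ω → EReal) : Ω → EReal :=
  fun ω => if ω ∈ A then f ω else g ω

/-- The piecewise combination `1_A m + 1_{Aᶜ} n` as an element of `M`. -/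
noncomputable def MSp.pc (A : Set Ω) (hA : MeasurableSet A) (m n : MSp Ω) : MSp Ω :=
  ⟨pcf A m.1 n.1, by classical unfold pcf; exact Measurable.ite hA m.2 n.2⟩

/-- `F : M → M` respects `P`-a.e. equality. -/
def RespectsAE (P : Measure Ω) (F : MSp Ω → MSp Ω) : Prop :=
  ∀ m n : MSp Ω, m.1 =ᵐ[P] n.1 → (F m).1 =ᵐ[P] (F n).1

/-- `F : M → M` is increasing with respect to the `P`-a.e. order. -/
def IncreasingAE (P : Measure Ω) (F : MSp Ω → MSp Ω) : Prop :=
  ∀ m n : MSp Ω, m.1 ≤ᵐ[P] n.1 → (F m).1 ≤ᵐ[P] (F n).1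

/-- `F : M → M` is local: `F(1_A m + 1_{Aᶜ} n) = 1_A F(m) + 1_{Aᶜ} F(n)` a.e. -/
def LocalAE (P : Measure Ω) (F : MSp Ω → MSp Ω) : Prop :=
  ∀ (A : Set Ω) (hA : MeasurableSet A) (m n : MSp Ω),
    (F (MSp.pc A hA m n)).1 =ᵐ[P] pcf A (F m).1 (F n).1

/-- `g` is an essential infimum of the set `S ⊆ M`. -/
def IsEssInfM (P : Measure Ω) (S : Set (MSp Ω)) (g : MSp Ω) : Prop :=
  (∀ f ∈ S, g.1 ≤ᵐ[P] f.1) ∧ ∀ h : MSp Ω, (∀ f ∈ S, h.1 ≤ᵐ[P] f.1) → h.1 ≤ᵐ[P] g.1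

/-- `g` is an essential supremum of the set `S ⊆ M`. -/
def IsEssSupM (P : Measure Ω) (S : Set (MSp Ω)) (g : MSp Ω) : Prop :=
  (∀ f ∈ S, f.1 ≤ᵐ[P] g.1) ∧ ∀ h : MSp Ω, (∀ f ∈ S, f.1 ≤ᵐ[P] h.1) → g.1 ≤ᵐ[P] h.1

/-- `Gl` is a conditional left-inverse of `F`: writing `A_s = {F(+∞) ≥ s}`, one has
`Gl(s) = +∞` a.e. on `A_sᶜ` and, on `A_s`, `Gl(s)` agrees a.e. with an essential infimum
of `{ m ∈ M : F(m) ≥ s a.e. on A_s }`. -/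
def IsCondLeftInv (P : Measure Ω) (F Gl : MSp Ω → MSp Ω) : Prop :=
  ∀ s : MSp Ω,
    (∀ᵐ ω ∂P, ω ∉ {ω' | s.1 ω' ≤ (F (MSp.mtop Ω)).1 ω'} → (Gl s).1 ω = ⊤) ∧
    ∃ g : MSp Ω,
      IsEssInfM P
        {m : MSp Ω | ∀ᵐ ω ∂P, ω ∈ {ω' | s.1 ω' ≤ (F (MSp.mtop Ω)).1 ω'} →
          s.1 ω ≤ (F m).1 ω} g ∧
      ∀ᵐ ω ∂P, ω ∈ {ω' | s.1 ω' ≤ (F (MSp.mtop Ω)).1 ω'} → (Gl s).1 ω = g.1 ω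

/-- `Gr` is a conditional right-inverse of `F`: writing `B_s = {F(-∞) ≤ s}`, one has
`Gr(s) = -∞` a.e. on `B_sᶜ` and, on `B_s`, `Gr(s)` agrees a.e. with an essential supremum
of `{ m ∈ M : F(m) ≤ s a.e. on B_s }`. -/
def IsCondRightInv (P : Measure Ω) (F Gr : MSp Ω → MSp Ω) : Prop :=
  ∀ s : MSp Ω,
    (∀ᵐ ω ∂P, ω ∉ {ω' | (F (MSp.mbot Ω)).1 ω' ≤ s.1 ω'} → (Gr s).1 ω = ⊥) ∧
    ∃ g : MSp Ω,
      IsEssSupM P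
        {m : MSp Ω | ∀ᵐ ω ∂P, ω ∈ {ω' | (F (MSp.mbot Ω)).1 ω' ≤ s.1 ω'} →
          (F m).1 ω ≤ s.1 ω} g ∧
      ∀ᵐ ω ∂P, ω ∈ {ω' | (F (MSp.mbot Ω)).1 ω' ≤ s.1 ω'} → (Gr s).1 ω = g.1 ω

/-- `Fm` is a left-continuous version of `F`: `Fm(m) = -∞` a.e. on `{m = -∞}` and, on
`{m > -∞}`, `Fm(m)` agrees a.e. with an essential supremum of
`{ F(n) : n < m a.e. on {m > -∞} }`. -/
def IsLeftContVersion (P : Measure Ω) (F Fm : MSp Ω → MSp Ω) : Prop :=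
  ∀ m : MSp Ω,
    (∀ᵐ ω ∂P, m.1 ω = ⊥ → (Fm m).1 ω = ⊥) ∧
    ∃ g : MSp Ω,
      IsEssSupM P
        (F '' {n : MSp Ω | ∀ᵐ ω ∂P, ω ∈ {ω' | ⊥ < m.1 ω'} → n.1 ω < m.1 ω}) g ∧
      ∀ᵐ ω ∂P, ω ∈ {ω' | ⊥ < m.1 ω'} → (Fm m).1 ω = g.1 ω

/-- `Fp` is a right-continuous version of `F`: `Fp(m) = +∞` a.e. on `{m = +∞}` and, on
`{m < +∞}`, `Fp(m)` agrees a.e. with an essential infimum of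
`{ F(n) : n > m a.e. on {m < +∞} }`. -/
def IsRightContVersion (P : Measure Ω) (F Fp : MSp Ω → MSp Ω) : Prop :=
  ∀ m : MSp Ω,
    (∀ᵐ ω ∂P, m.1 ω = ⊤ → (Fp m).1 ω = ⊤) ∧
    ∃ g : MSp Ω,
      IsEssInfM P
        (F '' {n : MSp Ω | ∀ᵐ ω ∂P, ω ∈ {ω' | m.1 ω' < ⊤} → m.1 ω < n.1 ω}) g ∧
      ∀ᵐ ω ∂P, ω ∈ {ω' | m.1 ω' < ⊤} → (Fp m).1 ω = g.1 ω

/-- `G` is a conditional inverse of `F`: it is local, increasing, respects a.e. equality,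
and for every left-continuous version `F⁻` and right-continuous version `F⁺` of `F` and
every `s ∈ M`: `F⁻(G(s)) ≤ s ≤ F⁺(G(s))` a.e. on `{F(-∞) < s < F(+∞)}`, `G(s) = -∞` a.e.
on `{s < F(-∞)}`, and `G(s) = +∞` a.e. on `{F(+∞) < s}`. -/
def IsCondInverse (P : Measure Ω) (F G : MSp Ω → MSp Ω) : Prop :=
  LocalAE P G ∧ IncreasingAE P G ∧ RespectsAE P G ∧
  ∀ (Fm Fp : MSp Ω → MSp Ω), IsLeftContVersion P F Fm → IsRightContVersion P F Fp →
    ∀ s : MSp Ω,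
      (∀ᵐ ω ∂P, (F (MSp.mbot Ω)).1 ω < s.1 ω → s.1 ω < (F (MSp.mtop Ω)).1 ω →
        (Fm (G s)).1 ω ≤ s.1 ω ∧ s.1 ω ≤ (Fp (G s)).1 ω) ∧
      (∀ᵐ ω ∂P, s.1 ω < (F (MSp.mbot Ω)).1 ω → (G s).1 ω = ⊥) ∧
      (∀ᵐ ω ∂P, (F (MSp.mtop Ω)).1 ω < s.1 ω → (G s).1 ω = ⊤)

/-! Everything rests on a Galois-type inequality for a conditional inverse `G`: between `F(-∞)`
and `F(+∞)`, `t < F(n)` forces `G(t) ≤ n`, because `n` truncated to `{n < G(t)}` is admissible in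
`F⁻(G(t)) ≤ t` and locality identifies its image with `F(n)` there. Hence every `G(t)` with `t < s`
lies below every member of the set defining `G_l(s)`; conversely, by the dual inequality the
rational step functions above `sup_{t < s} G(t)` belong to that set. So `G⁻(s) = G_l(s)`, and
`G_l(s) = G⁻(s) ≤ G(s)`. The statements about `G_r` and `G⁺` are the same ones for the reflected
maps `m ↦ -F(-m)`, `-G_r(-m)`, `-G(-m)`. The versions `F⁻`, `F⁺` needed to use the defining
property of `G` exist: `F⁺(m)` is the infimum of `F` over the rational step functions above `m`. -/

namespace EReal

lemma le_of_forall_rat_btwn_le {a b c : EReal} (hab : a < b)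
    (h : ∀ q : ℚ, a < ((q : ℝ) : EReal) → ((q : ℝ) : EReal) < b → ((q : ℝ) : EReal) ≤ c) :
    b ≤ c := by
  by_contra! hcb
  obtain ⟨q, h1, h2⟩ := exists_rat_btwn_of_lt (max_lt hab hcb)
  exact (h q ((le_max_left a c).trans_lt h1) h2).not_gt ((le_max_right a c).trans_lt h1)

lemma le_of_forall_lt_rat_le {a b : EReal}
    (h : ∀ q : ℚ, b < ((q : ℝ) : EReal) → a ≤ ((q : ℝ) : EReal)) : a ≤ b := by
  by_contra! hba
  obtain ⟨q, h1, h2⟩ := exists_rat_btwn_of_lt hba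
  exact (h q h1).not_gt h2

end EReal

namespace MSp

noncomputable def const (Ω : Type*) [MeasurableSpace Ω] (x : EReal) : MSp Ω :=
  ⟨fun _ => x, measurable_const⟩

lemma pc_of_mem {A : Set Ω} (hA : MeasurableSet A) (m n : MSp Ω) {ω : Ω} (h : ω ∈ A) :
    (pc A hA m n).1 ω = m.1 ω := if_pos h

lemma pc_of_not_mem {A : Set Ω} (hA : MeasurableSet A) (m n : MSp Ω) {ω : Ω} (h : ω ∉ A) :
    (pc A hA m n).1 ω = n.1 ω := if_neg h

noncomputable instance : InvolutiveNeg (MSp Ω) where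
  neg m := ⟨fun ω => -m.1 ω, m.2.neg⟩
  neg_neg m := Subtype.ext (funext fun ω => neg_neg (m.1 ω))

@[simp] lemma neg_val (m : MSp Ω) (ω : Ω) : (-m).1 ω = -m.1 ω := rfl

@[simp] lemma neg_mtop : -mtop Ω = mbot Ω := Subtype.ext (funext fun _ => EReal.neg_top)

@[simp] lemma neg_mbot : -mbot Ω = mtop Ω := Subtype.ext (funext fun _ => EReal.neg_bot)

lemma neg_pc (A : Set Ω) (hA : MeasurableSet A) (m n : MSp Ω) :
    -pc A hA m n = pc A hA (-m) (-n) := by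
  refine Subtype.ext (funext fun ω => ?_)
  by_cases h : ω ∈ A
  · simp only [neg_val, pc_of_mem hA _ _ h]
  · simp only [neg_val, pc_of_not_mem hA _ _ h]

noncomputable def negConj (F : MSp Ω → MSp Ω) : MSp Ω → MSp Ω := fun m => -F (-m)

@[simp] lemma negConj_val (F : MSp Ω → MSp Ω) (m : MSp Ω) (ω : Ω) :
    (negConj F m).1 ω = -(F (-m)).1 ω := rfl

@[simp] lemma negConj_negConj (F : MSp Ω → MSp Ω) : negConj (negConj F) = F := by
  funext m; simp [negConj]

lemma negConj_image (F : MSp Ω → MSp Ω) (T : Set (MSp Ω)) :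
    negConj F '' T = Neg.neg ⁻¹' (F '' (Neg.neg ⁻¹' T)) := by
  ext f
  constructor
  · rintro ⟨n, hn, rfl⟩
    exact ⟨-n, by simpa using hn, by simp [negConj]⟩
  · rintro ⟨n, hn, hf⟩
    exact ⟨-n, hn, by simp [negConj, hf]⟩

end MSp

open MSp

section

variable {P : Measure Ω} {F G : MSp Ω → MSp Ω}

lemma LocalAE.apply_pc_of_mem (hF : LocalAE P F) {A : Set Ω} (hA : MeasurableSet A)
    (m n : MSp Ω) : ∀ᵐ ω ∂P, ω ∈ A → (F (pc A hA m n)).1 ω = (F m).1 ω := by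
  filter_upwards [hF A hA m n] with ω h hω
  exact h.trans (if_pos hω)

lemma LocalAE.apply_pc_of_not_mem (hF : LocalAE P F) {A : Set Ω} (hA : MeasurableSet A)
    (m n : MSp Ω) : ∀ᵐ ω ∂P, ω ∉ A → (F (pc A hA m n)).1 ω = (F n).1 ω := by
  filter_upwards [hF A hA m n] with ω h hω
  exact h.trans (if_neg hω)

lemma LocalAE.negConj (hF : LocalAE P F) : LocalAE P (negConj F) := by
  intro A hA m n
  filter_upwards [hF A hA (-m) (-n)] with ω h
  simp only [pcf] at h ⊢
  split_ifs at h ⊢ <;> simp [MSp.negConj, neg_pc, h]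

lemma IncreasingAE.negConj (hF : IncreasingAE P F) : IncreasingAE P (negConj F) := by
  intro m n hmn
  filter_upwards [hF (-n) (-m) (by filter_upwards [hmn] with ω h; simpa using h)] with ω h
  simpa using h

lemma RespectsAE.negConj (hF : RespectsAE P F) : RespectsAE P (negConj F) := by
  intro m n hmn
  filter_upwards [hF (-m) (-n) (by filter_upwards [hmn] with ω h; simp [h])] with ω h
  simp [h]

lemma IsEssSupM.neg {S : Set (MSp Ω)} {g : MSp Ω} (hg : IsEssSupM P S g) :
    IsEssInfM P (Neg.neg ⁻¹' S) (-g) := by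
  refine ⟨fun f hf => ?_, fun h hh => ?_⟩
  · filter_upwards [hg.1 _ hf] with ω h; simpa [EReal.neg_le] using h
  · have := hg.2 (-h) fun f hf => by
      filter_upwards [hh (-f) (by simpa using hf)] with ω h; simpa [EReal.le_neg] using h
    filter_upwards [this] with ω h; simpa [EReal.le_neg] using h

lemma IsEssInfM.neg {S : Set (MSp Ω)} {g : MSp Ω} (hg : IsEssInfM P S g) :
    IsEssSupM P (Neg.neg ⁻¹' S) (-g) := by
  refine ⟨fun f hf => ?_, fun h hh => ?_⟩
  · filter_upwards [hg.1 _ hf] with ω h; simpa [EReal.le_neg] using h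
  · have := hg.2 (-h) fun f hf => by
      filter_upwards [hh (-f) (by simpa using hf)] with ω h; simpa [EReal.neg_le] using h
    filter_upwards [this] with ω h; simpa [EReal.neg_le] using h

def strictLowerSet (P : Measure Ω) (m : MSp Ω) : Set (MSp Ω) :=
  {n | ∀ᵐ ω ∂P, ω ∈ {ω' | ⊥ < m.1 ω'} → n.1 ω < m.1 ω}

def strictUpperSet (P : Measure Ω) (m : MSp Ω) : Set (MSp Ω) :=
  {n | ∀ᵐ ω ∂P, ω ∈ {ω' | m.1 ω' < ⊤} → m.1 ω < n.1 ω}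

def condLeftInvSet (P : Measure Ω) (F : MSp Ω → MSp Ω) (s : MSp Ω) : Set (MSp Ω) :=
  {m | ∀ᵐ ω ∂P, ω ∈ {ω' | s.1 ω' ≤ (F (mtop Ω)).1 ω'} → s.1 ω ≤ (F m).1 ω}

def condRightInvSet (P : Measure Ω) (F : MSp Ω → MSp Ω) (s : MSp Ω) : Set (MSp Ω) :=
  {m | ∀ᵐ ω ∂P, ω ∈ {ω' | (F (mbot Ω)).1 ω' ≤ s.1 ω'} → (F m).1 ω ≤ s.1 ω}

lemma neg_preimage_strictLowerSet (m : MSp Ω) :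
    Neg.neg ⁻¹' strictLowerSet P m = strictUpperSet P (-m) := by
  ext n
  simp [strictLowerSet, strictUpperSet, EReal.neg_lt_comm]

lemma neg_preimage_strictUpperSet (m : MSp Ω) :
    Neg.neg ⁻¹' strictUpperSet P m = strictLowerSet P (-m) := by
  ext n
  simp [strictLowerSet, strictUpperSet, EReal.lt_neg_comm]

lemma neg_preimage_condRightInvSet (s : MSp Ω) :
    Neg.neg ⁻¹' condRightInvSet P F (-s) = condLeftInvSet P (negConj F) s := by
  ext n
  simp [condLeftInvSet, condRightInvSet, EReal.le_neg]

lemma IsLeftContVersion.negConj {Fm : MSp Ω → MSp Ω} (hFm : IsLeftContVersion P F Fm) :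
    IsRightContVersion P (negConj F) (negConj Fm) := by
  intro m
  obtain ⟨hbot, g, hg, hagree⟩ := hFm (-m)
  refine ⟨?_, -g, ?_, ?_⟩
  · filter_upwards [hbot] with ω h hm
    simp [hm, h]
  · show IsEssInfM P (MSp.negConj F '' strictUpperSet P m) (-g)
    rw [negConj_image, neg_preimage_strictUpperSet]
    exact hg.neg
  · filter_upwards [hagree] with ω h hm
    simp [h (by simpa [EReal.lt_neg_comm] using hm)]

lemma IsRightContVersion.negConj {Fp : MSp Ω → MSp Ω} (hFp : IsRightContVersion P F Fp) :
    IsLeftContVersion P (negConj F) (negConj Fp) := by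
  intro m
  obtain ⟨htop, g, hg, hagree⟩ := hFp (-m)
  refine ⟨?_, -g, ?_, ?_⟩
  · filter_upwards [htop] with ω h hm
    simp [hm, h]
  · show IsEssSupM P (MSp.negConj F '' strictLowerSet P m) (-g)
    rw [negConj_image, neg_preimage_strictLowerSet]
    exact hg.neg
  · filter_upwards [hagree] with ω h hm
    simp [h (by simpa [EReal.neg_lt_comm] using hm)]

lemma IsCondRightInv.negConj {Gr : MSp Ω → MSp Ω} (hGr : IsCondRightInv P F Gr) :
    IsCondLeftInv P (negConj F) (negConj Gr) := by
  intro s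
  obtain ⟨hout, g, hg, hagree⟩ := hGr (-s)
  refine ⟨?_, -g, ?_, ?_⟩
  · filter_upwards [hout] with ω h hs
    simp_all [EReal.le_neg]
  · show IsEssInfM P (condLeftInvSet P (MSp.negConj F) s) (-g)
    rw [← neg_preimage_condRightInvSet]
    exact hg.neg
  · filter_upwards [hagree] with ω h hs
    simp_all [EReal.le_neg]

lemma IsCondInverse.negConj (hG : IsCondInverse P F G) :
    IsCondInverse P (negConj F) (negConj G) := by
  obtain ⟨hloc, hinc, hae, hspec⟩ := hG
  refine ⟨hloc.negConj, hinc.negConj, hae.negConj, fun Fm Fp hFm hFp s => ?_⟩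
  obtain ⟨hmid, hbot, htop⟩ :=
    hspec _ _ (by simpa using hFp.negConj) (by simpa using hFm.negConj) (-s)
  refine ⟨?_, ?_, ?_⟩
  · filter_upwards [hmid] with ω h h1 h2
    simp_all [MSp.negConj, EReal.le_neg, EReal.neg_le, EReal.lt_neg_comm, EReal.neg_lt_comm]
  · filter_upwards [htop] with ω h h1
    simp_all [EReal.lt_neg_comm]
  · filter_upwards [hbot] with ω h h1
    simp_all [EReal.neg_lt_comm]

lemma pc_mem_strictLowerSet {U : Set Ω} (hU : MeasurableSet U) {m s : MSp Ω}
    (h : ∀ ω ∈ U, m.1 ω < s.1 ω) : pc U hU m (mbot Ω) ∈ strictLowerSet P s := by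
  show ∀ᵐ _ ∂P, _
  refine .of_forall fun ω hs => ?_
  by_cases hω : ω ∈ U
  · rw [pc_of_mem hU _ _ hω]; exact h ω hω
  · rw [pc_of_not_mem hU _ _ hω]; exact hs

lemma pc_mem_strictUpperSet {U : Set Ω} (hU : MeasurableSet U) {m s : MSp Ω}
    (h : ∀ ω ∈ U, s.1 ω < m.1 ω) : pc U hU m (mtop Ω) ∈ strictUpperSet P s := by
  show ∀ᵐ _ ∂P, _
  refine .of_forall fun ω hs => ?_
  by_cases hω : ω ∈ U
  · rw [pc_of_mem hU _ _ hω]; exact h ω hω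
  · rw [pc_of_not_mem hU _ _ hω]; exact hs

lemma ae_apply_le_apply_on (hloc : LocalAE P F) (hinc : IncreasingAE P F) {C : Set Ω}
    (hC : MeasurableSet C) {m n : MSp Ω} (hmn : ∀ᵐ ω ∂P, ω ∈ C → m.1 ω ≤ n.1 ω) :
    ∀ᵐ ω ∂P, ω ∈ C → (F m).1 ω ≤ (F n).1 ω := by
  have hle : (pc C hC m n).1 ≤ᵐ[P] n.1 := by
    filter_upwards [hmn] with ω h
    by_cases hω : ω ∈ C
    · rw [pc_of_mem hC m n hω]; exact h hω
    · rw [pc_of_not_mem hC m n hω]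
  filter_upwards [hinc _ n hle, hloc.apply_pc_of_mem hC m n] with ω h hpc hω
  exact (hpc hω).symm.trans_le h

lemma IsEssInfM.ae_le_on {S : Set (MSp Ω)} {g x : MSp Ω} (hg : IsEssInfM P S g) {R : Set Ω}
    (hR : MeasurableSet R) (h : ∀ f ∈ S, ∀ᵐ ω ∂P, ω ∈ R → x.1 ω ≤ f.1 ω) :
    ∀ᵐ ω ∂P, ω ∈ R → x.1 ω ≤ g.1 ω := by
  have hpc := hg.2 (pc R hR x g) fun f hf => by
    filter_upwards [h f hf, hg.1 f hf] with ω hx hgf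
    by_cases hω : ω ∈ R
    · rw [pc_of_mem hR _ _ hω]; exact hx hω
    · rw [pc_of_not_mem hR _ _ hω]; exact hgf
  filter_upwards [hpc] with ω h hω
  rwa [pc_of_mem hR _ _ hω] at h

lemma IsEssSupM.ae_le_on {S : Set (MSp Ω)} {g x : MSp Ω} (hg : IsEssSupM P S g) {R : Set Ω}
    (hR : MeasurableSet R) (h : ∀ f ∈ S, ∀ᵐ ω ∂P, ω ∈ R → f.1 ω ≤ x.1 ω) :
    ∀ᵐ ω ∂P, ω ∈ R → g.1 ω ≤ x.1 ω := by
  have hpc := hg.2 (pc R hR x g) fun f hf => by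
    filter_upwards [h f hf, hg.1 f hf] with ω hx hgf
    by_cases hω : ω ∈ R
    · rw [pc_of_mem hR _ _ hω]; exact hx hω
    · rw [pc_of_not_mem hR _ _ hω]; exact hgf
  filter_upwards [hpc] with ω h hω
  rwa [pc_of_mem hR _ _ hω] at h

noncomputable def MSp.ratAbove (m : MSp Ω) (q : ℚ) : MSp Ω :=
  pc {ω | m.1 ω < ((q : ℝ) : EReal)} (measurableSet_lt m.2 measurable_const)
    (const Ω ((q : ℝ) : EReal)) (mtop Ω)

lemma MSp.ratAbove_of_lt {m : MSp Ω} {q : ℚ} {ω : Ω} (h : m.1 ω < ((q : ℝ) : EReal)) :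
    (m.ratAbove q).1 ω = ((q : ℝ) : EReal) :=
  pc_of_mem _ _ _ h

lemma MSp.ratAbove_mem_strictUpperSet (m : MSp Ω) (q : ℚ) :
    m.ratAbove q ∈ strictUpperSet P m :=
  pc_mem_strictUpperSet _ fun _ h => h

noncomputable def MSp.rightLimit (F : MSp Ω → MSp Ω) (m : MSp Ω) : MSp Ω :=
  ⟨fun ω => ⨅ q : ℚ, (F (m.ratAbove q)).1 ω, .iInf fun q => (F (m.ratAbove q)).2⟩

/-- The value `F(-∞)` off `{m < ⊤}` comes from the member `1_{m < ⊤} ⊤ + 1_{m = ⊤} ⊥`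
of `strictUpperSet P m`. -/
lemma isEssInfM_image_strictUpperSet (hloc : LocalAE P F) (hinc : IncreasingAE P F)
    (m : MSp Ω) :
    IsEssInfM P (F '' strictUpperSet P m)
      (pc {ω | m.1 ω < ⊤} (measurableSet_lt m.2 measurable_const)
        (rightLimit F m) (F (mbot Ω))) := by
  have hT : MeasurableSet {ω | m.1 ω < ⊤} := measurableSet_lt m.2 measurable_const
  refine ⟨?_, fun h hh => ?_⟩
  · rintro f ⟨n, hn, rfl⟩
    have hq : ∀ q : ℚ, ∀ᵐ ω ∂P, ω ∈ {ω | m.1 ω < ((q : ℝ) : EReal) ∧ ((q : ℝ) : EReal) ≤ n.1 ω} →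
        (F (m.ratAbove q)).1 ω ≤ (F n).1 ω := fun q =>
      ae_apply_le_apply_on hloc hinc ((measurableSet_lt m.2 measurable_const).inter
        (measurableSet_le measurable_const n.2))
        (.of_forall fun ω h => (ratAbove_of_lt h.1).trans_le h.2)
    have hbot : (F (mbot Ω)).1 ≤ᵐ[P] (F n).1 := hinc _ n (.of_forall fun ω => bot_le)
    filter_upwards [ae_all_iff.2 hq, hn, hbot] with ω hq hn hbot
    by_cases hω : m.1 ω < ⊤
    · obtain ⟨q, h1, h2⟩ := EReal.exists_rat_btwn_of_lt (hn hω)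
      exact (pc_of_mem hT _ _ hω).trans_le ((iInf_le _ q).trans (hq q ⟨h1, h2.le⟩))
    · exact (pc_of_not_mem hT _ _ hω).trans_le hbot
  · have hq := fun q : ℚ => hh _ (Set.mem_image_of_mem F (m.ratAbove_mem_strictUpperSet q))
    have hmem : pc _ hT (mtop Ω) (mbot Ω) ∈ strictUpperSet P m := by
      show ∀ᵐ _ ∂P, _
      exact .of_forall fun ω hω => (pc_of_mem hT _ _ hω).symm ▸ hω
    filter_upwards [ae_all_iff.2 hq, hh _ (Set.mem_image_of_mem F hmem),
      hloc.apply_pc_of_not_mem hT (mtop Ω) (mbot Ω)] with ω hq h0 hloc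
    by_cases hω : m.1 ω < ⊤
    · exact (le_iInf hq).trans_eq (pc_of_mem hT (rightLimit F m) _ hω).symm
    · exact (h0.trans_eq (hloc hω)).trans_eq (pc_of_not_mem hT (rightLimit F m) _ hω).symm

theorem exists_rightContVersion (hloc : LocalAE P F) (hinc : IncreasingAE P F) :
    ∃ Fp, IsRightContVersion P F Fp := by
  refine ⟨fun m => pc {ω | m.1 ω < ⊤} (measurableSet_lt m.2 measurable_const)
      (rightLimit F m) (mtop Ω),
    fun m => ⟨.of_forall fun ω h => pc_of_not_mem _ _ _ (by simp [h]), _,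
      isEssInfM_image_strictUpperSet hloc hinc m,
      .of_forall fun ω hω => (pc_of_mem _ _ _ hω).trans (pc_of_mem _ _ _ hω).symm⟩⟩

theorem exists_leftContVersion (hloc : LocalAE P F) (hinc : IncreasingAE P F) :
    ∃ Fm, IsLeftContVersion P F Fm := by
  obtain ⟨Fp, hFp⟩ := exists_rightContVersion hloc.negConj hinc.negConj
  exact ⟨negConj Fp, by simpa using hFp.negConj⟩

namespace IsCondInverse

theorem ae_eq_bot (hloc : LocalAE P F) (hinc : IncreasingAE P F) (hG : IsCondInverse P F G)
    (s : MSp Ω) : ∀ᵐ ω ∂P, s.1 ω < (F (mbot Ω)).1 ω → (G s).1 ω = ⊥ := by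
  obtain ⟨Fm, hFm⟩ := exists_leftContVersion hloc hinc
  obtain ⟨Fp, hFp⟩ := exists_rightContVersion hloc hinc
  exact (hG.2.2.2 Fm Fp hFm hFp s).2.1

theorem ae_eq_top (hloc : LocalAE P F) (hinc : IncreasingAE P F) (hG : IsCondInverse P F G)
    (s : MSp Ω) : ∀ᵐ ω ∂P, (F (mtop Ω)).1 ω < s.1 ω → (G s).1 ω = ⊤ := by
  obtain ⟨Fm, hFm⟩ := exists_leftContVersion hloc hinc
  obtain ⟨Fp, hFp⟩ := exists_rightContVersion hloc hinc
  exact (hG.2.2.2 Fm Fp hFm hFp s).2.2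

theorem ae_le_of_lt_apply (hloc : LocalAE P F) (hinc : IncreasingAE P F)
    (hG : IsCondInverse P F G) (t n : MSp Ω) :
    ∀ᵐ ω ∂P, (F (mbot Ω)).1 ω < t.1 ω → t.1 ω < (F (mtop Ω)).1 ω → t.1 ω < (F n).1 ω →
      (G t).1 ω ≤ n.1 ω := by
  obtain ⟨Fm, hFm⟩ := exists_leftContVersion hloc hinc
  obtain ⟨Fp, hFp⟩ := exists_rightContVersion hloc hinc
  obtain ⟨-, g, hg, hFm_eq⟩ := hFm (G t)
  set V := {ω | t.1 ω < (F n).1 ω ∧ n.1 ω < (G t).1 ω}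
  have hV : MeasurableSet V := (measurableSet_lt t.2 (F n).2).inter (measurableSet_lt n.2 (G t).2)
  have hmem : pc V hV n (mbot Ω) ∈ strictLowerSet P (G t) := pc_mem_strictLowerSet hV fun _ h => h.2
  have hV_null : ∀ᵐ ω ∂P, (F (mbot Ω)).1 ω < t.1 ω → t.1 ω < (F (mtop Ω)).1 ω → ω ∉ V := by
    filter_upwards [hg.1 _ (Set.mem_image_of_mem F hmem), hFm_eq, (hG.2.2.2 Fm Fp hFm hFp t).1,
      hloc.apply_pc_of_mem hV n (mbot Ω)] with ω hle hFm_eq hsand hpc h1 h2 hω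
    have : (F n).1 ω ≤ t.1 ω := calc
      (F n).1 ω = (F (pc V hV n (mbot Ω))).1 ω := (hpc hω).symm
      _ ≤ g.1 ω := hle
      _ = (Fm (G t)).1 ω := (hFm_eq (bot_le.trans_lt hω.2)).symm
      _ ≤ t.1 ω := (hsand h1 h2).1
    exact this.not_gt hω.1
  filter_upwards [hV_null] with ω h h1 h2 h3
  exact not_lt.1 fun h4 => h h1 h2 ⟨h3, h4⟩

theorem ae_le_of_apply_lt (hloc : LocalAE P F) (hinc : IncreasingAE P F)
    (hG : IsCondInverse P F G) (t n : MSp Ω) :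
    ∀ᵐ ω ∂P, (F (mbot Ω)).1 ω < t.1 ω → t.1 ω < (F (mtop Ω)).1 ω → (F n).1 ω < t.1 ω →
      n.1 ω ≤ (G t).1 ω := by
  filter_upwards [hG.negConj.ae_le_of_lt_apply hloc.negConj hinc.negConj (-t) (-n)]
    with ω h h1 h2 h3
  simpa using h (by simpa using h2) (by simpa using h1) (by simpa using h3)


theorem ratAbove_mem_condLeftInvSet (hloc : LocalAE P F) (hinc : IncreasingAE P F)
    (hG : IsCondInverse P F G) {s w : MSp Ω}
    (hw : ∀ t ∈ strictLowerSet P s, (G t).1 ≤ᵐ[P] w.1) (q : ℚ) :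
    w.ratAbove q ∈ condLeftInvSet P F s := by
  have hU : ∀ r : ℚ, MeasurableSet
      {ω | (F (mbot Ω)).1 ω < ((r : ℝ) : EReal) ∧ ((r : ℝ) : EReal) < s.1 ω} := fun r =>
    (measurableSet_lt (F (mbot Ω)).2 measurable_const).inter (measurableSet_lt measurable_const s.2)
  have hr : ∀ r : ℚ, ∀ᵐ ω ∂P, (F (mbot Ω)).1 ω < ((r : ℝ) : EReal) → ((r : ℝ) : EReal) < s.1 ω →
      s.1 ω ≤ (F (mtop Ω)).1 ω → w.1 ω < ((q : ℝ) : EReal) →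
      ((r : ℝ) : EReal) ≤ (F (w.ratAbove q)).1 ω := by
    intro r
    let t := pc _ (hU r) (const Ω ((r : ℝ) : EReal)) (mbot Ω)
    filter_upwards [hw t (pc_mem_strictLowerSet _ fun _ h => h.2),
      hG.ae_le_of_apply_lt hloc hinc t (w.ratAbove q)] with ω hGw hK h1 h2 hA hwq
    have ht : t.1 ω = ((r : ℝ) : EReal) := pc_of_mem _ _ _ ⟨h1, h2⟩
    rw [ht] at hK
    by_contra! hlt
    have hq := (hK h1 (h2.trans_le hA) hlt).trans hGw
    rw [ratAbove_of_lt hwq] at hq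
    exact hq.not_gt hwq
  show ∀ᵐ _ ∂P, _
  filter_upwards [ae_all_iff.2 hr, hloc.apply_pc_of_not_mem _ (const Ω ((q : ℝ) : EReal)) (mtop Ω),
    hinc (mbot Ω) (w.ratAbove q) (.of_forall fun _ => bot_le)] with ω hr hpc hbot hA
  by_cases hwq : w.1 ω < ((q : ℝ) : EReal)
  · by_cases hsa : s.1 ω ≤ (F (mbot Ω)).1 ω
    · exact hsa.trans hbot
    · exact EReal.le_of_forall_rat_btwn_le (not_le.1 hsa) fun r h1 h2 => hr r h1 h2 hA hwq
  · exact hA.trans_eq (hpc hwq).symm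

theorem essInf_condLeftInvSet_ae_le (hloc : LocalAE P F) (hinc : IncreasingAE P F)
    (hG : IsCondInverse P F G) {s w g : MSp Ω} (hg : IsEssInfM P (condLeftInvSet P F s) g)
    (hw : ∀ t ∈ strictLowerSet P s, (G t).1 ≤ᵐ[P] w.1) : g.1 ≤ᵐ[P] w.1 := by
  filter_upwards [ae_all_iff.2 fun q => hg.1 _ (ratAbove_mem_condLeftInvSet hloc hinc hG hw q)]
    with ω h
  exact EReal.le_of_forall_lt_rat_le fun q hq => (h q).trans_eq (ratAbove_of_lt hq)

theorem ae_le_of_mem_condLeftInvSet (hloc : LocalAE P F) (hinc : IncreasingAE P F)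
    (hG : IsCondInverse P F G) {s t m : MSp Ω} (ht : t ∈ strictLowerSet P s)
    (hm : m ∈ condLeftInvSet P F s) :
    ∀ᵐ ω ∂P, s.1 ω ≤ (F (mtop Ω)).1 ω → ⊥ < s.1 ω → (G t).1 ω ≤ m.1 ω := by
  -- raise `t` to a rational level `q ∈ (max t F(-∞), s)`, where `ae_le_of_lt_apply` applies
  have hq : ∀ q : ℚ, ∀ᵐ ω ∂P, t.1 ω < ((q : ℝ) : EReal) → (F (mbot Ω)).1 ω < ((q : ℝ) : EReal) →
      ((q : ℝ) : EReal) < s.1 ω → s.1 ω ≤ (F (mtop Ω)).1 ω → (G t).1 ω ≤ m.1 ω := by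
    intro q
    have hE : MeasurableSet {ω | t.1 ω < ((q : ℝ) : EReal) ∧
        (F (mbot Ω)).1 ω < ((q : ℝ) : EReal) ∧ ((q : ℝ) : EReal) < s.1 ω} :=
      (measurableSet_lt t.2 measurable_const).inter
        ((measurableSet_lt (F (mbot Ω)).2 measurable_const).inter
          (measurableSet_lt measurable_const s.2))
    let tq := pc _ hE (const Ω ((q : ℝ) : EReal)) t
    have htq : t.1 ≤ᵐ[P] tq.1 := .of_forall fun ω => by
      by_cases hω : ω ∈ {ω | t.1 ω < ((q : ℝ) : EReal) ∧
          (F (mbot Ω)).1 ω < ((q : ℝ) : EReal) ∧ ((q : ℝ) : EReal) < s.1 ω}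
      · exact hω.1.le.trans_eq (pc_of_mem hE (const Ω _) t hω).symm
      · exact (pc_of_not_mem hE _ _ hω).symm.le
    filter_upwards [hG.2.1 t tq htq, hG.ae_le_of_lt_apply hloc hinc tq m, hm]
      with ω hGt hK hm h1 h2 h3 hA
    have htq_eq : tq.1 ω = ((q : ℝ) : EReal) := pc_of_mem hE _ _ ⟨h1, h2, h3⟩
    rw [htq_eq] at hK
    exact hGt.trans (hK h2 (h3.trans_le hA) (h3.trans_le (hm hA)))
  filter_upwards [ae_all_iff.2 hq, ht, hG.ae_eq_bot hloc hinc t] with ω hq ht hbot hA hs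
  by_cases hsa : s.1 ω ≤ (F (mbot Ω)).1 ω
  · exact (hbot ((ht hs).trans_le hsa)).trans_le bot_le
  · obtain ⟨q, h1, h2⟩ := EReal.exists_rat_btwn_of_lt (max_lt (ht hs) (not_le.1 hsa))
    exact hq q ((le_max_left _ _).trans_lt h1) ((le_max_right _ _).trans_lt h1) h2 hA

theorem essSup_image_strictLowerSet_eq_top (hloc : LocalAE P F) (hinc : IncreasingAE P F)
    (hG : IsCondInverse P F G) {s g : MSp Ω} (hg : IsEssSupM P (G '' strictLowerSet P s) g) :
    ∀ᵐ ω ∂P, (F (mtop Ω)).1 ω < s.1 ω → g.1 ω = ⊤ := by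
  have hq : ∀ q : ℚ, ∀ᵐ ω ∂P, (F (mtop Ω)).1 ω < ((q : ℝ) : EReal) →
      ((q : ℝ) : EReal) < s.1 ω → g.1 ω = ⊤ := by
    intro q
    have hU : MeasurableSet {ω | (F (mtop Ω)).1 ω < ((q : ℝ) : EReal) ∧
        ((q : ℝ) : EReal) < s.1 ω} :=
      (measurableSet_lt (F (mtop Ω)).2 measurable_const).inter
        (measurableSet_lt measurable_const s.2)
    let u := pc _ hU (const Ω ((q : ℝ) : EReal)) (mbot Ω)
    have hu_mem : u ∈ strictLowerSet P s := pc_mem_strictLowerSet hU fun _ h => h.2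
    filter_upwards [hg.1 _ (Set.mem_image_of_mem G hu_mem), hG.ae_eq_top hloc hinc u]
      with ω hle htop h1 h2
    have hu : u.1 ω = ((q : ℝ) : EReal) := pc_of_mem hU _ _ ⟨h1, h2⟩
    exact top_le_iff.1 ((htop (h1.trans_eq hu.symm)).symm.trans_le hle)
  filter_upwards [ae_all_iff.2 hq] with ω hq hs
  obtain ⟨q, h1, h2⟩ := EReal.exists_rat_btwn_of_lt hs
  exact hq q h1 h2

end IsCondInverse

theorem essInf_condLeftInvSet_eq_bot (hloc : LocalAE P F) {s g : MSp Ω}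
    (hg : IsEssInfM P (condLeftInvSet P F s) g) :
    ∀ᵐ ω ∂P, s.1 ω ≤ (F (mbot Ω)).1 ω → g.1 ω = ⊥ := by
  have hB : MeasurableSet {ω | s.1 ω ≤ (F (mbot Ω)).1 ω} := measurableSet_le s.2 (F (mbot Ω)).2
  have hmem : pc _ hB (mbot Ω) (mtop Ω) ∈ condLeftInvSet P F s := by
    show ∀ᵐ _ ∂P, _
    filter_upwards [hloc.apply_pc_of_mem hB (mbot Ω) (mtop Ω),
      hloc.apply_pc_of_not_mem hB (mbot Ω) (mtop Ω)] with ω hin hout hA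
    by_cases hω : ω ∈ {ω | s.1 ω ≤ (F (mbot Ω)).1 ω}
    · exact hω.trans_eq (hin hω).symm
    · exact hA.trans_eq (hout hω).symm
  filter_upwards [hg.1 _ hmem] with ω hle hs
  exact le_bot_iff.1 (hle.trans_eq (pc_of_mem hB _ _ hs))

theorem IsLeftContVersion.ae_le_self (hloc : LocalAE P G) (hinc : IncreasingAE P G)
    {Gm : MSp Ω → MSp Ω} (hGm : IsLeftContVersion P G Gm) (s : MSp Ω) :
    (Gm s).1 ≤ᵐ[P] (G s).1 := by
  obtain ⟨hbot, g, hg, hGm_eq⟩ := hGm s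
  have hR : MeasurableSet {ω | ⊥ < s.1 ω} := measurableSet_lt measurable_const s.2
  have hle := hg.ae_le_on hR <| by
    rintro _ ⟨t, ht, rfl⟩
    exact ae_apply_le_apply_on hloc hinc hR (by filter_upwards [ht] with ω h hs using (h hs).le)
  filter_upwards [hle, hbot, hGm_eq] with ω hle hbot hGm_eq
  by_cases hs : ⊥ < s.1 ω
  · exact (hGm_eq hs).trans_le (hle hs)
  · exact (hbot (not_bot_lt_iff.1 hs)).trans_le bot_le

theorem IsLeftContVersion.ae_eq_condLeftInv (hloc : LocalAE P F) (hinc : IncreasingAE P F)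
    {Gl Gm : MSp Ω → MSp Ω} (hGl : IsCondLeftInv P F Gl) (hG : IsCondInverse P F G)
    (hGm : IsLeftContVersion P G Gm) (s : MSp Ω) : (Gm s).1 =ᵐ[P] (Gl s).1 := by
  obtain ⟨hGl_top, g, hg, hGl_eq⟩ := hGl s
  obtain ⟨hGm_bot, gm, hgm, hGm_eq⟩ := hGm s
  have hR : MeasurableSet {ω | s.1 ω ≤ (F (mtop Ω)).1 ω ∧ ⊥ < s.1 ω} :=
    (measurableSet_le s.2 (F (mtop Ω)).2).inter (measurableSet_lt measurable_const s.2)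
  have hle : g.1 ≤ᵐ[P] gm.1 :=
    hG.essInf_condLeftInvSet_ae_le hloc hinc hg fun t ht => hgm.1 _ (Set.mem_image_of_mem G ht)
  have hge := hgm.ae_le_on hR <| by
    rintro _ ⟨t, ht, rfl⟩
    refine hg.ae_le_on hR fun m hm => ?_
    filter_upwards [hG.ae_le_of_mem_condLeftInvSet hloc hinc ht hm] with ω h hω using h hω.1 hω.2
  filter_upwards [hle, hge, hG.essSup_image_strictLowerSet_eq_top hloc hinc hgm,
    essInf_condLeftInvSet_eq_bot hloc hg, hGl_top, hGl_eq, hGm_bot, hGm_eq]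
    with ω hle hge hgm_top hg_bot hGl_top hGl_eq hGm_bot hGm_eq
  by_cases hA : s.1 ω ≤ (F (mtop Ω)).1 ω
  · by_cases hs : ⊥ < s.1 ω
    · rw [hGm_eq hs, hGl_eq hA]
      exact le_antisymm (hge ⟨hA, hs⟩) hle
    · have hs : s.1 ω = ⊥ := not_bot_lt_iff.1 hs
      rw [hGm_bot hs, hGl_eq hA, hg_bot (hs.trans_le bot_le)]
  · rw [hGm_eq (bot_le.trans_lt (not_le.1 hA)), hGl_top hA, hgm_top (not_le.1 hA)]

theorem IsCondLeftInv.ae_le (hloc : LocalAE P F) (hinc : IncreasingAE P F)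
    {Gl : MSp Ω → MSp Ω} (hGl : IsCondLeftInv P F Gl) (hG : IsCondInverse P F G) (s : MSp Ω) :
    (Gl s).1 ≤ᵐ[P] (G s).1 := by
  obtain ⟨Gm, hGm⟩ := exists_leftContVersion hG.1 hG.2.1
  filter_upwards [hGm.ae_eq_condLeftInv hloc hinc hGl hG s, hGm.ae_le_self hG.1 hG.2.1 s]
    with ω h hle
  exact h.symm.trans_le hle

end

theorem condInverse_sandwich_general (P : Measure Ω)
    (F Gl Gr G : MSp Ω → MSp Ω)
    (hFloc : LocalAE P F) (hFinc : IncreasingAE P F)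
    (hGl : IsCondLeftInv P F Gl) (hGr : IsCondRightInv P F Gr)
    (hG : IsCondInverse P F G) :
    (∀ s : MSp Ω, (Gl s).1 ≤ᵐ[P] (G s).1 ∧ (G s).1 ≤ᵐ[P] (Gr s).1) ∧
    (∀ Gm : MSp Ω → MSp Ω, IsLeftContVersion P G Gm →
      ∀ s : MSp Ω, (Gm s).1 =ᵐ[P] (Gl s).1) ∧
    (∀ Gp : MSp Ω → MSp Ω, IsRightContVersion P G Gp →
      ∀ s : MSp Ω, (Gp s).1 =ᵐ[P] (Gr s).1) := by
  have hGr' := hGr.negConj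
  have hG' := hG.negConj
  refine ⟨fun s => ⟨hGl.ae_le hFloc hFinc hG s, ?_⟩,
    fun Gm hGm s => hGm.ae_eq_condLeftInv hFloc hFinc hGl hG s, fun Gp hGp s => ?_⟩
  · filter_upwards [hGr'.ae_le hFloc.negConj hFinc.negConj hG' (-s)] with ω h
    simpa using h
  · filter_upwards [hGp.negConj.ae_eq_condLeftInv hFloc.negConj hFinc.negConj hGr' hG' (-s)]
      with ω h
    simpa using h

/-- Sandwich property of conditional inverses: if `F : M → M` is local, increasing and
respects a.e. equality, `Gl`, `Gr` are a conditional left- and right-inverse of `F` and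
`G` is any conditional inverse of `F`, then `Gl(s) ≤ G(s) ≤ Gr(s)` a.e. for every `s`;
moreover every left-continuous version of `G` agrees a.e. with `Gl` and every
right-continuous version of `G` agrees a.e. with `Gr`. -/
theorem condInverse_sandwich (P : Measure Ω) [IsProbabilityMeasure P]
    (F Gl Gr G : MSp Ω → MSp Ω)
    (hFloc : LocalAE P F) (hFinc : IncreasingAE P F) (hFae : RespectsAE P F)
    (hGl : IsCondLeftInv P F Gl) (hGr : IsCondRightInv P F Gr)
    (hG : IsCondInverse P F G) :
    (∀ s : MSp Ω, (Gl s).1 ≤ᵐ[P] (G s).1 ∧ (G s).1 ≤ᵐ[P] (Gr s).1) ∧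
    (∀ Gm : MSp Ω → MSp Ω, IsLeftContVersion P G Gm →
      ∀ s : MSp Ω, (Gm s).1 =ᵐ[P] (Gl s).1) ∧
    (∀ Gp : MSp Ω → MSp Ω, IsRightContVersion P G Gp →
      ∀ s : MSp Ω, (Gp s).1 =ᵐ[P] (Gr s).1) :=
  condInverse_sandwich_general P F Gl Gr G hFloc hFinc hGl hGr hG
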